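/- Let S be an inverse semigroup such that for some fixed nonnegative integer i, (ab)^j = a^j b^j holds for all a, b in S and for j = i, i+1, i+2. Then S is commutative. -/
import Mathlib


/-- An inverse semigroup: every element has a unique inverse `x⁻¹`
with `x * x⁻¹ * x = x` and `x⁻¹ * x * x⁻¹ = x⁻¹`. -/
class InverseSemigroup (S : Type*) extends Semigroup S, Inv S where
  mul_inv_mul : ∀ x : S, x * x⁻¹ * x = x
  inv_mul_inv : ∀ x : S, x⁻¹ * x * x⁻¹ = x⁻¹
  inv_unique : ∀ x y : S, x * y * x = x → y * x * y = y → y = x⁻¹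

/-- `pw x n` is the `n`-th power of `x` in a semigroup, for `n ≥ 1`
(with the junk value `pw x 0 = x`, which makes the exponent-`0` condition trivially true). -/
def pw {S : Type*} [Semigroup S] (x : S) : ℕ → S
  | 0 => x
  | 1 => x
  | n + 2 => pw x (n + 1) * x


section Aux
variable {S : Type*} [InverseSemigroup S]

open InverseSemigroup

private lemma mim (x : S) : x * x⁻¹ * x = x := mul_inv_mul x
private lemma imi (x : S) : x⁻¹ * x * x⁻¹ = x⁻¹ := inv_mul_inv x

private lemma inv_invS (x : S) : (x⁻¹)⁻¹ = x :=
  (inv_unique x⁻¹ x (imi x) (mim x)).symm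

private lemma idem_inv (e : S) (he : e * e = e) : e⁻¹ = e :=
  (inv_unique e e (by rw [he, he]) (by rw [he, he])).symm

private lemma idem_e (x : S) : (x * x⁻¹) * (x * x⁻¹) = x * x⁻¹ := by
  rw [show x * x⁻¹ * (x * x⁻¹) = (x * x⁻¹ * x) * x⁻¹ by simp only [mul_assoc], mim]

private lemma idem_f (x : S) : (x⁻¹ * x) * (x⁻¹ * x) = x⁻¹ * x := by
  rw [show x⁻¹ * x * (x⁻¹ * x) = (x⁻¹ * x * x⁻¹) * x by simp only [mul_assoc], imi]

-- (e*f)⁻¹ is idempotent, for idempotents e f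
private lemma idem_aux (e f : S) (he : e * e = e) (hf : f * f = f) :
    (e * f)⁻¹ * (e * f)⁻¹ = (e * f)⁻¹ := by
  have h1 : f * (e * f)⁻¹ * e = (e * f)⁻¹ := by
    apply InverseSemigroup.inv_unique
    · calc e * f * (f * (e * f)⁻¹ * e) * (e * f)
          = (e * (f * f)) * (e*f)⁻¹ * ((e * e) * f) := by simp only [mul_assoc]
        _ = e * f * (e*f)⁻¹ * (e * f) := by rw [he, hf]
        _ = e * f := mim _
    · calc f * (e * f)⁻¹ * e * (e * f) * (f * (e * f)⁻¹ * e)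
          = f * ((e*f)⁻¹ * ((e * e) * (f * f)) * (e*f)⁻¹) * e := by simp only [mul_assoc]
        _ = f * ((e*f)⁻¹ * (e * f) * (e*f)⁻¹) * e := by rw [he, hf]
        _ = f * (e * f)⁻¹ * e := by rw [imi]
  calc (e * f)⁻¹ * (e * f)⁻¹
      = (f * (e * f)⁻¹ * e) * (f * (e * f)⁻¹ * e) := by rw [h1]
    _ = f * ((e*f)⁻¹ * (e * f) * (e*f)⁻¹) * e := by simp only [mul_assoc]
    _ = f * (e * f)⁻¹ * e := by rw [imi]
    _ = (e * f)⁻¹ := h1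

private lemma idem_mul (e f : S) (he : e * e = e) (hf : f * f = f) :
    (e * f) * (e * f) = e * f := by
  have h2 := idem_aux e f he hf
  have h3 : (e * f)⁻¹ = e * f := by
    have := idem_inv _ h2
    rw [inv_invS] at this
    exact this.symm
  rw [← h3]; exact h2

private lemma idem_comm (e f : S) (he : e * e = e) (hf : f * f = f) :
    e * f = f * e := by
  have hef := idem_mul e f he hf
  have hfe := idem_mul f e hf he
  have h1 : f * e = (e * f)⁻¹ := by
    apply InverseSemigroup.inv_unique
    · calc e * f * (f * e) * (e * f) = (e * (f * f)) * ((e * e) * f) := by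
            simp only [mul_assoc]
        _ = (e * f) * (e * f) := by rw [he, hf]
        _ = e * f := hef
    · calc f * e * (e * f) * (f * e) = (f * (e * e)) * ((f * f) * e) := by
            simp only [mul_assoc]
        _ = (f * e) * (f * e) := by rw [he, hf]
        _ = f * e := hfe
  rw [h1, idem_inv _ hef]

private lemma inv_mulS (x y : S) : (x * y)⁻¹ = y⁻¹ * x⁻¹ := by
  have hc := idem_comm (y * y⁻¹) (x⁻¹ * x) (idem_e y) (idem_f x)
  refine (InverseSemigroup.inv_unique _ _ ?_ ?_).symm
  · calc x * y * (y⁻¹ * x⁻¹) * (x * y)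
        = x * ((y * y⁻¹) * (x⁻¹ * x)) * y := by simp only [mul_assoc]
      _ = x * ((x⁻¹ * x) * (y * y⁻¹)) * y := by rw [hc]
      _ = (x * x⁻¹ * x) * (y * y⁻¹ * y) := by simp only [mul_assoc]
      _ = x * y := by rw [mim, mim]
  · calc y⁻¹ * x⁻¹ * (x * y) * (y⁻¹ * x⁻¹)
        = y⁻¹ * ((x⁻¹ * x) * (y * y⁻¹)) * x⁻¹ := by simp only [mul_assoc]
      _ = y⁻¹ * ((y * y⁻¹) * (x⁻¹ * x)) * x⁻¹ := by rw [hc]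
      _ = (y⁻¹ * y * y⁻¹) * (x⁻¹ * x * x⁻¹) := by simp only [mul_assoc]
      _ = y⁻¹ * x⁻¹ := by rw [imi, imi]

end Aux

section Pw
variable {S : Type*} [Semigroup S]

private lemma pw_succ (x : S) (n : ℕ) (hn : 1 ≤ n) : pw x (n + 1) = pw x n * x := by
  match n, hn with
  | n + 1, _ => rfl

private lemma pw_succ' (x : S) (n : ℕ) (hn : 1 ≤ n) : pw x (n + 1) = x * pw x n := by
  induction n with
  | zero => omega
  | succ n ih =>
    match n, ih with
    | 0, _ => rfl
    | m + 1, ih =>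
      have hn1 : 1 ≤ m + 1 := by omega
      calc pw x (m + 3) = pw x (m + 2) * x := rfl
        _ = (x * pw x (m + 1)) * x := by rw [ih hn1]
        _ = x * (pw x (m + 1) * x) := mul_assoc ..
        _ = x * pw x (m + 2) := by rw [← pw_succ x (m + 1) hn1]

private lemma pw_idem (e : S) (he : e * e = e) : ∀ n, pw e n = e
  | 0 => rfl
  | 1 => rfl
  | n + 2 => by rw [pw, pw_idem e he (n+1), he]

end Pw

/-- An inverse semigroup satisfying `(ab)^j = a^j b^j` for all `a, b`, for three fixed
consecutive nonnegative exponents `j = i, i+1, i+2`, is commutative. -/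
theorem stmt_11 {S : Type*} [InverseSemigroup S] (i : ℕ)
    (h0 : ∀ a b : S, pw (a * b) i = pw a i * pw b i)
    (h1 : ∀ a b : S, pw (a * b) (i + 1) = pw a (i + 1) * pw b (i + 1))
    (h2 : ∀ a b : S, pw (a * b) (i + 2) = pw a (i + 2) * pw b (i + 2)) :
    ∀ x y : S, x * y = y * x := by
  -- Step 1: S is a Clifford semigroup
  have clif : ∀ a : S, a * a⁻¹ = a⁻¹ * a := by
    intro a
    have key_e : a * a⁻¹ = (a * a) * (a⁻¹ * a⁻¹) := by
      cases i with
      | zero =>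
        have h := h2 a a⁻¹
        rw [show pw (a * a⁻¹) (0+2) = (a * a⁻¹) * (a * a⁻¹) from rfl, idem_e a] at h
        exact h
      | succ n =>
        have e_i : a * a⁻¹ = pw a (n+1) * pw a⁻¹ (n+1) := by
          rw [← h0 a a⁻¹, pw_idem _ (idem_e a)]
        have e_i1 : a * a⁻¹ = pw a (n+1+1) * pw a⁻¹ (n+1+1) := by
          rw [← h1 a a⁻¹, pw_idem _ (idem_e a)]
        calc a * a⁻¹ = pw a (n+1+1) * pw a⁻¹ (n+1+1) := e_i1
          _ = (a * pw a (n+1)) * (pw a⁻¹ (n+1) * a⁻¹) := by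
              rw [pw_succ' a (n+1) (by omega), pw_succ a⁻¹ (n+1) (by omega)]
          _ = a * ((pw a (n+1) * pw a⁻¹ (n+1)) * a⁻¹) := by simp only [mul_assoc]
          _ = a * ((a * a⁻¹) * a⁻¹) := by rw [← e_i]
          _ = (a * a) * (a⁻¹ * a⁻¹) := by simp only [mul_assoc]
    have key_f : a⁻¹ * a = (a⁻¹ * a⁻¹) * (a * a) := by
      cases i with
      | zero =>
        have h := h2 a⁻¹ a
        rw [show pw (a⁻¹ * a) (0+2) = (a⁻¹ * a) * (a⁻¹ * a) from rfl, idem_f a] at h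
        exact h
      | succ n =>
        have f_i : a⁻¹ * a = pw a⁻¹ (n+1) * pw a (n+1) := by
          rw [← h0 a⁻¹ a, pw_idem _ (idem_f a)]
        have f_i1 : a⁻¹ * a = pw a⁻¹ (n+1+1) * pw a (n+1+1) := by
          rw [← h1 a⁻¹ a, pw_idem _ (idem_f a)]
        calc a⁻¹ * a = pw a⁻¹ (n+1+1) * pw a (n+1+1) := f_i1
          _ = (a⁻¹ * pw a⁻¹ (n+1)) * (pw a (n+1) * a) := by
              rw [pw_succ' a⁻¹ (n+1) (by omega), pw_succ a (n+1) (by omega)]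
          _ = a⁻¹ * ((pw a⁻¹ (n+1) * pw a (n+1)) * a) := by simp only [mul_assoc]
          _ = a⁻¹ * ((a⁻¹ * a) * a) := by rw [← f_i]
          _ = (a⁻¹ * a⁻¹) * (a * a) := by simp only [mul_assoc]
    have hef := idem_comm (a * a⁻¹) (a⁻¹ * a) (idem_e a) (idem_f a)
    have step1 : a = (a * a⁻¹) * (a⁻¹ * (a * a)) := by
      calc a = a * (a⁻¹ * a) := by rw [← mul_assoc, mim]
        _ = a * ((a⁻¹ * a⁻¹) * (a * a)) := by rw [key_f]
        _ = (a * a⁻¹) * (a⁻¹ * (a * a)) := by simp only [mul_assoc]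
    have hEF : a * a⁻¹ = (a * a⁻¹) * (a⁻¹ * a) := by
      calc a * a⁻¹ = ((a * a⁻¹) * (a⁻¹ * (a * a))) * a⁻¹ := by rw [← step1]
        _ = (a * a⁻¹) * ((a⁻¹ * a) * (a * a⁻¹)) := by simp only [mul_assoc]
        _ = (a * a⁻¹) * ((a * a⁻¹) * (a⁻¹ * a)) := by rw [← hef]
        _ = ((a * a⁻¹) * (a * a⁻¹)) * (a⁻¹ * a) := by simp only [mul_assoc]
        _ = (a * a⁻¹) * (a⁻¹ * a) := by rw [idem_e a]
    have step2 : a = (a * (a * a⁻¹)) * (a⁻¹ * a) := by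
      calc a = (a * a⁻¹) * a := by rw [mim]
        _ = ((a * a) * (a⁻¹ * a⁻¹)) * a := by rw [← key_e]
        _ = (a * (a * a⁻¹)) * (a⁻¹ * a) := by simp only [mul_assoc]
    have hFE : a⁻¹ * a = (a * a⁻¹) * (a⁻¹ * a) := by
      calc a⁻¹ * a = a⁻¹ * ((a * (a * a⁻¹)) * (a⁻¹ * a)) := by rw [← step2]
        _ = (a⁻¹ * a) * ((a * a⁻¹) * (a⁻¹ * a)) := by simp only [mul_assoc]
        _ = (a⁻¹ * a) * ((a⁻¹ * a) * (a * a⁻¹)) := by rw [hef]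
        _ = ((a⁻¹ * a) * (a⁻¹ * a)) * (a * a⁻¹) := by simp only [mul_assoc]
        _ = (a⁻¹ * a) * (a * a⁻¹) := by rw [idem_f a]
        _ = (a * a⁻¹) * (a⁻¹ * a) := by rw [hef]
    rw [hEF, ← hFE]
  -- Step 2: idempotents are central
  have central : ∀ e z : S, e * e = e → e * z = z * e := by
    intro e z he
    have hinv : (z * e)⁻¹ = e * z⁻¹ := by rw [inv_mulS, idem_inv e he]
    have h := clif (z * e)
    rw [hinv] at h
    have hconj : (z * e) * z⁻¹ = e * (z⁻¹ * z) := by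
      calc (z * e) * z⁻¹ = z * ((e * e) * z⁻¹) := by rw [he]; simp only [mul_assoc]
        _ = (z * e) * (e * z⁻¹) := by simp only [mul_assoc]
        _ = (e * z⁻¹) * (z * e) := h
        _ = e * ((z⁻¹ * z) * e) := by simp only [mul_assoc]
        _ = e * (e * (z⁻¹ * z)) := by rw [← idem_comm e (z⁻¹ * z) he (idem_f z)]
        _ = (e * e) * (z⁻¹ * z) := by simp only [mul_assoc]
        _ = e * (z⁻¹ * z) := by rw [he]
    calc e * z = e * ((z * z⁻¹) * z) := by rw [mim]
      _ = e * ((z⁻¹ * z) * z) := by rw [clif z]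
      _ = (e * (z⁻¹ * z)) * z := by simp only [mul_assoc]
      _ = ((z * e) * z⁻¹) * z := by rw [hconj]
      _ = z * (e * (z⁻¹ * z)) := by simp only [mul_assoc]
      _ = z * ((z⁻¹ * z) * e) := by rw [idem_comm e (z⁻¹ * z) he (idem_f z)]
      _ = (z * (z⁻¹ * z)) * e := by simp only [mul_assoc]
      _ = z * e := by rw [← mul_assoc, mim]
  -- helper to move central idempotents
  have swap : ∀ g z w : S, g * g = g → z * (g * w) = g * (z * w) := by
    intro g z w hg
    rw [← mul_assoc, ← central g z hg, mul_assoc]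
  -- Step 3: powers multiply with inverse powers to the idempotent
  have Epow1 : ∀ (a : S) (k : ℕ), pw a k * pw a⁻¹ k = a * a⁻¹ := by
    intro a k
    induction k with
    | zero => rfl
    | succ n ih =>
      match n, ih with
      | 0, _ => rfl
      | m + 1, ih =>
        calc pw a (m+1+1) * pw a⁻¹ (m+1+1)
            = (pw a (m+1) * a) * (a⁻¹ * pw a⁻¹ (m+1)) := by
              rw [pw_succ a (m+1) (by omega), pw_succ' a⁻¹ (m+1) (by omega)]
          _ = pw a (m+1) * ((a * a⁻¹) * pw a⁻¹ (m+1)) := by simp only [mul_assoc]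
          _ = (a * a⁻¹) * (pw a (m+1) * pw a⁻¹ (m+1)) := by
              rw [swap (a * a⁻¹) (pw a (m+1)) (pw a⁻¹ (m+1)) (idem_e a)]
          _ = (a * a⁻¹) * (a * a⁻¹) := by rw [ih]
          _ = a * a⁻¹ := idem_e a
  have Epow2 : ∀ (a : S) (k : ℕ), pw a⁻¹ k * pw a k = a * a⁻¹ := by
    intro a k
    have h := Epow1 a⁻¹ k
    rw [inv_invS] at h
    rw [h, ← clif]
  -- Step 4: key cancellation consequence of two consecutive exponent laws
  have keyC : ∀ (x y : S) (j : ℕ), 1 ≤ j →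
      pw (x * y) j = pw x j * pw y j →
      pw (x * y) (j + 1) = pw x (j + 1) * pw y (j + 1) →
      ((x * x⁻¹) * (y * y⁻¹)) * (x * pw y j) = ((x * x⁻¹) * (y * y⁻¹)) * (pw y j * x) := by
    intro x y j hj hA hB
    have hmain : pw x (j+1) * pw y (j+1) = (pw x j * pw y j) * (x * y) := by
      rw [← hB, pw_succ _ j hj, hA]
    have h2' : pw x⁻¹ j * ((pw x (j+1) * pw y (j+1)) * y⁻¹)
        = pw x⁻¹ j * (((pw x j * pw y j) * (x * y)) * y⁻¹) := by rw [hmain]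
    have lhs : pw x⁻¹ j * ((pw x (j+1) * pw y (j+1)) * y⁻¹)
        = ((x * x⁻¹) * (y * y⁻¹)) * (x * pw y j) := by
      calc pw x⁻¹ j * ((pw x (j+1) * pw y (j+1)) * y⁻¹)
          = pw x⁻¹ j * (((pw x j * x) * ((pw y j * y) * y⁻¹))) := by
            rw [pw_succ x j hj, pw_succ y j hj]; simp only [mul_assoc]
        _ = (pw x⁻¹ j * pw x j) * (x * (pw y j * (y * y⁻¹))) := by simp only [mul_assoc]
        _ = (x * x⁻¹) * (x * (pw y j * (y * y⁻¹))) := by rw [Epow2]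
        _ = (x * x⁻¹) * (x * ((y * y⁻¹) * pw y j)) := by
            rw [← central (y * y⁻¹) (pw y j) (idem_e y)]
        _ = (x * x⁻¹) * ((y * y⁻¹) * (x * pw y j)) := by
            rw [swap (y * y⁻¹) x (pw y j) (idem_e y)]
        _ = ((x * x⁻¹) * (y * y⁻¹)) * (x * pw y j) := by simp only [mul_assoc]
    have rhs : pw x⁻¹ j * (((pw x j * pw y j) * (x * y)) * y⁻¹)
        = ((x * x⁻¹) * (y * y⁻¹)) * (pw y j * x) := by
      calc pw x⁻¹ j * (((pw x j * pw y j) * (x * y)) * y⁻¹)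
          = (pw x⁻¹ j * pw x j) * (pw y j * (x * (y * y⁻¹))) := by simp only [mul_assoc]
        _ = (x * x⁻¹) * (pw y j * (x * (y * y⁻¹))) := by rw [Epow2]
        _ = (x * x⁻¹) * (pw y j * ((y * y⁻¹) * x)) := by
            rw [← central (y * y⁻¹) x (idem_e y)]
        _ = (x * x⁻¹) * ((y * y⁻¹) * (pw y j * x)) := by
            rw [swap (y * y⁻¹) (pw y j) x (idem_e y)]
        _ = ((x * x⁻¹) * (y * y⁻¹)) * (pw y j * x) := by simp only [mul_assoc]
    rw [← lhs, ← rhs]; exact h2'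
  -- Step 5: conclude
  intro x y
  have hE : ((x * x⁻¹) * (y * y⁻¹)) * ((x * x⁻¹) * (y * y⁻¹)) = (x * x⁻¹) * (y * y⁻¹) :=
    idem_mul _ _ (idem_e x) (idem_e y)
  have G : ((x * x⁻¹) * (y * y⁻¹)) * (x * y) = ((x * x⁻¹) * (y * y⁻¹)) * (y * x) := by
    cases i with
    | zero => exact keyC x y 1 le_rfl (h1 x y) (h2 x y)
    | succ n =>
      have Ci := keyC x y (n+1) (by omega) (h0 x y) (h1 x y)
      have Ci1 := keyC x y (n+1+1) (by omega) (h1 x y) (h2 x y)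
      have comb : ((x * x⁻¹) * (y * y⁻¹)) * ((x * y) * pw y (n+1))
          = ((x * x⁻¹) * (y * y⁻¹)) * ((y * x) * pw y (n+1)) := by
        calc ((x * x⁻¹) * (y * y⁻¹)) * ((x * y) * pw y (n+1))
            = ((x * x⁻¹) * (y * y⁻¹)) * (x * pw y (n+1+1)) := by
              rw [pw_succ' y (n+1) (by omega)]; simp only [mul_assoc]
          _ = ((x * x⁻¹) * (y * y⁻¹)) * (pw y (n+1+1) * x) := Ci1
          _ = ((x * x⁻¹) * (y * y⁻¹)) * ((y * pw y (n+1)) * x) := by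
              rw [pw_succ' y (n+1) (by omega)]
          _ = y * (((x * x⁻¹) * (y * y⁻¹)) * (pw y (n+1) * x)) := by
              rw [mul_assoc y (pw y (n+1)) x,
                swap ((x * x⁻¹) * (y * y⁻¹)) y (pw y (n+1) * x) hE]
          _ = y * (((x * x⁻¹) * (y * y⁻¹)) * (x * pw y (n+1))) := by rw [← Ci]
          _ = ((x * x⁻¹) * (y * y⁻¹)) * ((y * x) * pw y (n+1)) := by
              rw [swap ((x * x⁻¹) * (y * y⁻¹)) y (x * pw y (n+1)) hE]
              simp only [mul_assoc]
      have comb2 := congrArg (· * pw y⁻¹ (n+1)) comb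
      simp only [mul_assoc] at comb2
      have yf : y * (y * y⁻¹) = y := by
        rw [← central (y * y⁻¹) y (idem_e y)]; exact mim y
      rw [Epow1 y (n+1), yf] at comb2
      rw [show x * (y * y⁻¹) = (y * y⁻¹) * x from (central (y * y⁻¹) x (idem_e y)).symm,
        ← mul_assoc y (y * y⁻¹) x, yf] at comb2
      simp only [mul_assoc]
      exact comb2
  have hxy : (x * y) * (x * y)⁻¹ = (x * x⁻¹) * (y * y⁻¹) := by
    rw [inv_mulS]
    calc (x * y) * (y⁻¹ * x⁻¹) = x * ((y * y⁻¹) * x⁻¹) := by simp only [mul_assoc]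
      _ = x * (x⁻¹ * (y * y⁻¹)) := by rw [central (y * y⁻¹) x⁻¹ (idem_e y)]
      _ = (x * x⁻¹) * (y * y⁻¹) := by rw [← mul_assoc]
  have hyx : (y * x) * (y * x)⁻¹ = (x * x⁻¹) * (y * y⁻¹) := by
    rw [inv_mulS]
    calc (y * x) * (x⁻¹ * y⁻¹) = y * ((x * x⁻¹) * y⁻¹) := by simp only [mul_assoc]
      _ = y * (y⁻¹ * (x * x⁻¹)) := by rw [central (x * x⁻¹) y⁻¹ (idem_e x)]
      _ = (y * y⁻¹) * (x * x⁻¹) := by rw [← mul_assoc]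
      _ = (x * x⁻¹) * (y * y⁻¹) := idem_comm _ _ (idem_e y) (idem_e x)
  calc x * y = ((x * y) * (x * y)⁻¹) * (x * y) := (mim (x * y)).symm
    _ = ((x * x⁻¹) * (y * y⁻¹)) * (x * y) := by rw [hxy]
    _ = ((x * x⁻¹) * (y * y⁻¹)) * (y * x) := G
    _ = ((y * x) * (y * x)⁻¹) * (y * x) := by rw [hyx]
    _ = y * x := mim (y * x)
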